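/- Let p, q be probability distributions on a finite set with ‖p − q‖_TV ≤ ε and q(v) ≥ p_min > 0 for all v. Then KL(p‖q) ≤ 4ε²/p_min. -/
import Mathlib


open Finset

/-- If `‖p − q‖_TV ≤ ε` and `q(v) ≥ p_min > 0`, then `KL(p‖q) ≤ 4ε²/p_min`. -/
theorem kl_le_of_tv_close {V : Type*} [Fintype V]
    (p q : V → ℝ)
    (hp_nonneg : ∀ v, 0 ≤ p v) (hp_sum : ∑ v, p v = 1)
    (hq_nonneg : ∀ v, 0 ≤ q v) (hq_sum : ∑ v, q v = 1)
    (pmin : ℝ) (hpmin : 0 < pmin) (hfloor : ∀ v, pmin ≤ q v)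
    (ε : ℝ) (hTV : (1 / 2) * ∑ v, |p v - q v| ≤ ε) :
    (∑ v, p v * Real.log (p v / q v)) ≤ 4 * ε ^ 2 / pmin := by
  have hq_pos : ∀ v, 0 < q v := fun v => lt_of_lt_of_le hpmin (hfloor v)
  set S := ∑ v, |p v - q v| with hS
  have hS_nonneg : 0 ≤ S := Finset.sum_nonneg fun v _ => abs_nonneg _
  have hS2 : S ≤ 2 * ε := by linarith
  -- pointwise bound
  have key : ∀ v, p v * Real.log (p v / q v) ≤ (p v - q v) + (p v - q v) ^ 2 / q v := by
    intro v
    have hq' : q v ≠ 0 := (hq_pos v).ne'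
    rcases eq_or_lt_of_le (hp_nonneg v) with h0 | hp
    · rw [← h0, zero_mul]
      have h2 : ((0:ℝ) - q v) + ((0:ℝ) - q v) ^ 2 / q v = 0 := by
        field_simp
        ring
      rw [h2]
    · have hlog : Real.log (p v / q v) ≤ p v / q v - 1 :=
        Real.log_le_sub_one_of_pos (div_pos hp (hq_pos v))
      have h1 : p v * Real.log (p v / q v) ≤ p v * (p v / q v - 1) :=
        mul_le_mul_of_nonneg_left hlog (le_of_lt hp)
      have h2 : p v * (p v / q v - 1) = (p v - q v) + (p v - q v) ^ 2 / q v := by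
        field_simp
        ring
      linarith [h1, h2.le]
  calc (∑ v, p v * Real.log (p v / q v))
      ≤ ∑ v, ((p v - q v) + (p v - q v) ^ 2 / q v) :=
        Finset.sum_le_sum fun v _ => key v
    _ = ∑ v, (p v - q v) ^ 2 / q v := by
        rw [Finset.sum_add_distrib, Finset.sum_sub_distrib, hp_sum, hq_sum]
        ring
    _ ≤ ∑ v, (p v - q v) ^ 2 / pmin :=
        Finset.sum_le_sum fun v _ =>
          div_le_div_of_nonneg_left (sq_nonneg _) hpmin (hfloor v)
    _ = (∑ v, (p v - q v) ^ 2) / pmin := by rw [Finset.sum_div]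
    _ ≤ S ^ 2 / pmin := by
        gcongr
        have hsq : ∀ v : V, (p v - q v) ^ 2 = |p v - q v| * |p v - q v| := by
          intro v; rw [← sq_abs, sq]
        calc (∑ v, (p v - q v) ^ 2) = ∑ v, |p v - q v| * |p v - q v| := by
              simp_rw [hsq]
          _ ≤ ∑ v, |p v - q v| * S := by
              apply Finset.sum_le_sum
              intro v hv
              have hle : |p v - q v| ≤ S := by
                rw [hS]
                exact Finset.single_le_sum (f := fun i => |p i - q i|)
                  (fun i _ => abs_nonneg _) (Finset.mem_univ v)
              exact mul_le_mul_of_nonneg_left hle (abs_nonneg _)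
          _ = S * S := by rw [← Finset.sum_mul]
          _ = S ^ 2 := (sq S).symm
    _ ≤ 4 * ε ^ 2 / pmin := by
        gcongr
        nlinarith [hS2, hS_nonneg]
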